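/- arXiv:2508.02722 — 3 statements merged into one kernel-verified Lean document; each statement's English description precedes it below -/
import Mathlib

section
/- Let P(z) = ∑_{j=0}^m a_j z^{m-j} be a polynomial with complex coefficients and N an even positive integer with φ(N) ≤ m. Then Φ_N(z) divides P(z) if and only if for every h ∈ {0, 1, ..., N/2 - 1}, ∑_{d | N} μ(d) ∑_{j ≡ h - ∑_{p | d} N/p (mod N)} a_j = 0. -/
/-!
Write `A(z) = ∑ a_j z^j`, so that `P(z) = z^m A(z⁻¹)` and `Φ_N ∣ P` iff `A` vanishes at the
primitive `N`-th roots of unity. Grouping the `a_j` by `j mod N` and twisting by the Möbius sum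
gives a function `S` on `ℤ/N` whose Fourier coefficient at the character `ψ` with `ψ 1 = z` is
`∏_{p ∣ N} (1 - z^{N/p}) · A(z)`; the product vanishes exactly when `z` is not primitive. Hence
`Φ_N ∣ P` iff every Fourier coefficient of `S` vanishes, i.e. iff `S = 0`. For even `N` the
factor `1 - z^{N/2}` makes `S` antiperiodic with antiperiod `N/2`, so it suffices to check
`h < N/2`.
-/

open Polynomial Finset ArithmeticFunction

theorem sum_divisors_moebius_mul_prod_primeFactors {R : Type*} [CommRing R] {N : ℕ} (hN : N ≠ 0)
    (x : ℕ → R) :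
    ∑ d ∈ N.divisors, (moebius d : R) * ∏ p ∈ d.primeFactors, x p =
      ∏ p ∈ N.primeFactors, (1 - x p) := by
  classical
  rw [← sum_filter_of_ne (p := Squarefree) fun d _ hd =>
      moebius_ne_zero_iff_squarefree.1 fun h => hd (by rw [h, Int.cast_zero, zero_mul]),
    Nat.sum_divisors_filter_squarefree hN, Nat.factors_eq]
  simp_rw [sub_eq_add_neg, prod_one_add, prod_neg]
  refine sum_congr rfl fun t ht => ?_
  have hprime : ∀ p ∈ t, p.Prime := fun p hp =>
    Nat.prime_of_mem_primeFactors (mem_powerset.1 ht hp)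
  have hval : t.val.prod = ∏ p ∈ t, p := prod_val t
  rw [hval, Nat.primeFactors_prod hprime,
    isMultiplicative_moebius.map_prod_of_prime t hprime,
    prod_congr rfl fun p hp => moebius_apply_prime (hprime p hp)]
  simp

theorem isPrimitiveRoot_iff_prod_one_sub_pow_div_ne_zero {K : Type*} [CommRing K] [IsDomain K]
    {N : ℕ} (hN : N ≠ 0) {z : K} (hz : z ^ N = 1) :
    IsPrimitiveRoot z N ↔ ∏ p ∈ N.primeFactors, (1 - z ^ (N / p)) ≠ 0 := by
  simp_rw [prod_ne_zero_iff, sub_ne_zero, ne_comm (a := (1 : K))]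
  refine ⟨fun h p hp hzp => ?_, fun h => IsPrimitiveRoot.iff_orderOf.2 <|
    orderOf_eq_of_pow_and_pow_div_prime (Nat.pos_of_ne_zero hN) hz fun p hp hpN =>
      h p (Nat.mem_primeFactors.2 ⟨hp, hpN, hN⟩)⟩
  have hdvd : N ∣ N / p := (h.pow_eq_one_iff_dvd _).1 hzp
  have hpos : 0 < N / p := Nat.div_pos (Nat.le_of_mem_primeFactors hp)
    (Nat.prime_of_mem_primeFactors hp).pos
  have hlt : N / p < N := Nat.div_lt_self (Nat.pos_of_ne_zero hN)
    (Nat.prime_of_mem_primeFactors hp).one_lt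
  exact absurd (Nat.le_of_dvd hpos hdvd) (not_le.2 hlt)

namespace AddChar

theorem map_sum_eq_prod {A M ι : Type*} [AddCommMonoid A] [CommMonoid M]
    (ψ : AddChar A M) (s : Finset ι) (f : ι → A) :
    ψ (∑ i ∈ s, f i) = ∏ i ∈ s, ψ (f i) :=
  map_prod ψ.toMonoidHom (fun i => Multiplicative.ofAdd (f i)) s

theorem map_natCast_eq_pow {A M : Type*} [AddMonoidWithOne A] [Monoid M]
    (ψ : AddChar A M) (n : ℕ) : ψ n = ψ 1 ^ n := by
  rw [← nsmul_one, map_nsmul_eq_pow]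

theorem sum_mul_apply_sub {G R : Type*} [AddCommGroup G] [Fintype G] [CommRing R]
    (ψ : AddChar G R) (f : G → R) (c : G) :
    ∑ x, f (x - c) * ψ x = ψ c * ∑ x, f x * ψ x := by
  rw [mul_sum]
  refine Fintype.sum_equiv (Equiv.subRight c) _ _ fun x => ?_
  rw [Equiv.subRight_apply, mul_left_comm, ← ψ.map_add_eq_mul, add_sub_cancel]

/-- Fourier inversion: `∑_ψ ψ(x - a) = |G| · [x = a]`. -/
theorem eq_zero_of_forall_sum_mul_eq_zero {G : Type*} [AddCommGroup G] [Fintype G]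
    {f : G → ℂ} (hf : ∀ ψ : AddChar G ℂ, ∑ x, f x * ψ x = 0) : f = 0 := by
  classical
  funext a
  have hcard : (Fintype.card G : ℂ) ≠ 0 := Nat.cast_ne_zero.2 Fintype.card_ne_zero
  have : f a * Fintype.card G = 0 := calc
    f a * Fintype.card G = ∑ x, f x * ∑ ψ : AddChar G ℂ, ψ (x - a) := by
      simp only [sum_apply_eq_ite, sub_eq_zero, mul_ite, mul_zero, sum_ite_eq', mem_univ,
        if_true]
    _ = ∑ ψ : AddChar G ℂ, ψ (-a) * ∑ x, f x * ψ x := by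
      simp only [mul_sum]
      rw [sum_comm]
      refine sum_congr rfl fun ψ _ => sum_congr rfl fun x _ => ?_
      rw [sub_eq_add_neg, map_add_eq_mul]
      ring
    _ = 0 := by simp [hf]
  simpa [hcard] using this

end AddChar

section Cyclotomic

variable {K : Type*} [Field K] {N : ℕ} [NeZero N]

theorem cyclotomic_dvd_iff_forall_isRoot {ζ : K} (hζ : IsPrimitiveRoot ζ N) {P : K[X]} :
    cyclotomic N K ∣ P ↔ ∀ z : K, IsPrimitiveRoot z N → P.IsRoot z := by
  refine ⟨fun ⟨q, hq⟩ z hz => ?_, fun H => ?_⟩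
  · rw [hq, IsRoot, eval_mul, (hz.isRoot_cyclotomic (NeZero.pos N)).eq_zero, zero_mul]
  · rw [cyclotomic_eq_prod_X_sub_primitiveRoots hζ]
    refine prod_dvd_of_coprime
      (fun u _ v _ huv => pairwise_coprime_X_sub_C Function.injective_id huv)
      fun z hz => dvd_iff_isRoot.2 (H z ((mem_primitiveRoots (NeZero.pos N)).1 hz))

theorem eval_sum_C_mul_X_pow_sub (m : ℕ) (a : ℕ → K) {z : K} (hz : z ≠ 0) :
    eval z (∑ j ∈ range (m + 1), C (a j) * X ^ (m - j)) =
      z ^ m * ∑ j ∈ range (m + 1), a j * z⁻¹ ^ j := by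
  rw [eval_finsetSum, mul_sum]
  refine sum_congr rfl fun j hj => ?_
  have hjm : m - j + j = m := Nat.sub_add_cancel (Nat.lt_succ_iff.1 (mem_range.1 hj))
  rw [eval_mul, eval_C, eval_pow, eval_X, inv_pow, ← hjm, pow_add, Nat.add_sub_cancel]
  field_simp

theorem cyclotomic_dvd_sum_C_mul_X_pow_sub_iff {ζ : K} (hζ : IsPrimitiveRoot ζ N) (m : ℕ)
    (a : ℕ → K) :
    cyclotomic N K ∣ ∑ j ∈ range (m + 1), C (a j) * X ^ (m - j) ↔
      ∀ z : K, IsPrimitiveRoot z N → ∑ j ∈ range (m + 1), a j * z ^ j = 0 := by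
  rw [cyclotomic_dvd_iff_forall_isRoot hζ]
  have hne : ∀ z : K, IsPrimitiveRoot z N → z ≠ 0 := fun z hz => hz.ne_zero (NeZero.ne N)
  refine ⟨fun H z hz => ?_, fun H z hz => ?_⟩
  · have := H z⁻¹ hz.inv
    rwa [IsRoot, eval_sum_C_mul_X_pow_sub m a (inv_ne_zero (hne z hz)), inv_inv,
      mul_eq_zero, or_iff_right (pow_ne_zero _ (inv_ne_zero (hne z hz)))] at this
  · rw [IsRoot, eval_sum_C_mul_X_pow_sub m a (hne z hz), H z⁻¹ hz.inv, mul_zero]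

end Cyclotomic

section ResidueSum

variable {R : Type*} [CommRing R] (N : ℕ) (s : Finset ℕ) (a : ℕ → R)

noncomputable def residueSum (r : ZMod N) : R :=
  ∑ j ∈ s with ((j : ℕ) : ZMod N) = r, a j

def primeFactorShift (d : ℕ) : ZMod N :=
  ∑ p ∈ d.primeFactors, ((N / p : ℕ) : ZMod N)

noncomputable def moebiusResidueSum (r : ZMod N) : R :=
  ∑ d ∈ N.divisors, (moebius d : R) * residueSum N s a (r - primeFactorShift N d)

theorem moebiusResidueSum_natCast (h : ℕ) :
    moebiusResidueSum N s a h =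
      ∑ d ∈ N.divisors, (moebius d : R) *
        ∑ j ∈ s with ((j : ℕ) : ℤ) ≡
            h - ∑ p ∈ d.primeFactors, ((N / p : ℕ) : ℤ) [ZMOD N], a j := by
  refine sum_congr rfl fun d _ => congrArg _ (sum_congr (filter_congr fun j _ => ?_) fun _ _ => rfl)
  rw [← ZMod.intCast_eq_intCast_iff]
  simp only [Int.cast_sub, Int.cast_sum, Int.cast_natCast, primeFactorShift]

variable [NeZero N]

theorem sum_residueSum_mul_addChar (ψ : AddChar (ZMod N) R) :
    ∑ r, residueSum N s a r * ψ r = ∑ j ∈ s, a j * ψ j := by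
  rw [← sum_fiberwise s (fun j => (j : ZMod N)) fun j => a j * ψ j]
  refine sum_congr rfl fun r _ => ?_
  rw [residueSum, sum_mul]
  exact sum_congr rfl fun j hj => by rw [(mem_filter.1 hj).2]

theorem sum_moebiusResidueSum_mul_addChar (ψ : AddChar (ZMod N) R) :
    ∑ r, moebiusResidueSum N s a r * ψ r =
      (∏ p ∈ N.primeFactors, (1 - ψ (N / p : ℕ))) * ∑ j ∈ s, a j * ψ j := by
  simp_rw [moebiusResidueSum, sum_mul, mul_assoc]
  rw [sum_comm]
  simp_rw [← mul_sum, ψ.sum_mul_apply_sub, sum_residueSum_mul_addChar, ← mul_assoc,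
    ← sum_mul, primeFactorShift, ψ.map_sum_eq_prod]
  rw [sum_divisors_moebius_mul_prod_primeFactors (NeZero.ne N)]

end ResidueSum

section Complex

variable {N : ℕ} [NeZero N] (s : Finset ℕ) (a : ℕ → ℂ)

theorem moebiusResidueSum_eq_zero_iff :
    moebiusResidueSum N s a = 0 ↔
      ∀ ζ : ℂ, IsPrimitiveRoot ζ N → ∑ j ∈ s, a j * ζ ^ j = 0 := by
  have key (ψ : AddChar (ZMod N) ℂ) : ∑ r, moebiusResidueSum N s a r * ψ r =
      (∏ p ∈ N.primeFactors, (1 - ψ 1 ^ (N / p))) * ∑ j ∈ s, a j * ψ 1 ^ j := by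
    simp only [sum_moebiusResidueSum_mul_addChar, AddChar.map_natCast_eq_pow]
  refine ⟨fun hS ζ hζ => ?_, fun hA => AddChar.eq_zero_of_forall_sum_mul_eq_zero fun ψ => ?_⟩
  · have hψ : AddChar.zmodChar N hζ.pow_eq_one 1 = ζ := by
      simpa using AddChar.zmodChar_apply' hζ.pow_eq_one 1
    have := key (AddChar.zmodChar N hζ.pow_eq_one)
    rw [hS, hψ] at this
    simp only [Pi.zero_apply, zero_mul, sum_const_zero] at this
    exact (mul_eq_zero.1 this.symm).resolve_left
      ((isPrimitiveRoot_iff_prod_one_sub_pow_div_ne_zero (NeZero.ne N) hζ.pow_eq_one).1 hζ)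
  · have hψN : ψ 1 ^ N = 1 := by
      rw [← AddChar.map_natCast_eq_pow, ZMod.natCast_self, AddChar.map_zero_eq_one]
    rw [key]
    by_cases hprim : IsPrimitiveRoot (ψ 1) N
    · rw [hA _ hprim, mul_zero]
    · rw [not_not.1 (mt (isPrimitiveRoot_iff_prod_one_sub_pow_div_ne_zero (NeZero.ne N) hψN).2
        hprim), zero_mul]

theorem moebiusResidueSum_add_half (hN : Even N) (r : ZMod N) :
    moebiusResidueSum N s a (r + (N / 2 : ℕ)) = -moebiusResidueSum N s a r := by
  set c : ZMod N := ((N / 2 : ℕ) : ZMod N)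
  have hcc : c + c = 0 := by
    rw [← Nat.cast_add, ← two_mul, Nat.mul_div_cancel' hN.two_dvd, ZMod.natCast_self]
  have h2 : 2 ∈ N.primeFactors :=
    Nat.mem_primeFactors.2 ⟨Nat.prime_two, hN.two_dvd, NeZero.ne N⟩
  suffices (fun r => moebiusResidueSum N s a (r + c) + moebiusResidueSum N s a r) = 0 from
    eq_neg_of_add_eq_zero_left (congrFun this r)
  refine AddChar.eq_zero_of_forall_sum_mul_eq_zero fun ψ => ?_
  have hψc : ψ c * ψ c = 1 := by rw [← AddChar.map_add_eq_mul, hcc, AddChar.map_zero_eq_one]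
  have hneg : ψ (-c) = ψ c := by rw [neg_eq_of_add_eq_zero_left hcc]
  calc ∑ x, (moebiusResidueSum N s a (x + c) + moebiusResidueSum N s a x) * ψ x
      = (ψ c + 1) * ∑ x, moebiusResidueSum N s a x * ψ x := by
        simp_rw [add_mul, sum_add_distrib, ← sub_neg_eq_add _ c, ψ.sum_mul_apply_sub, hneg]
        ring
    _ = ((ψ c + 1) * (1 - ψ c)) * ((∏ p ∈ N.primeFactors.erase 2, (1 - ψ (N / p : ℕ))) *
          ∑ j ∈ s, a j * ψ j) := by
        rw [sum_moebiusResidueSum_mul_addChar, ← mul_prod_erase _ _ h2]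
        ring
    _ = 0 := by rw [show (ψ c + 1) * (1 - ψ c) = 0 by linear_combination -hψc, zero_mul]

theorem moebiusResidueSum_eq_zero_iff_of_even (hN : Even N) :
    moebiusResidueSum N s a = 0 ↔ ∀ h < N / 2, moebiusResidueSum N s a h = 0 := by
  refine ⟨fun hS h _ => by rw [hS, Pi.zero_apply], fun H => funext fun r => ?_⟩
  have hr : r = (r.val : ZMod N) := (ZMod.natCast_zmod_val r).symm
  by_cases hlt : r.val < N / 2
  · rw [hr, H _ hlt, Pi.zero_apply]
  · have hsub : r.val - N / 2 < N / 2 := by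
      have := ZMod.val_lt r
      obtain ⟨k, hk⟩ := hN
      omega
    rw [hr, ← Nat.sub_add_cancel (not_lt.1 hlt), Nat.cast_add, moebiusResidueSum_add_half s a hN,
      H _ hsub, neg_zero, Pi.zero_apply]

end Complex

theorem divisibility_by_cyclotomic_even_general (m N : ℕ) (a : ℕ → ℂ) (hN : 1 ≤ N)
    (hNeven : Even N) :
    (Polynomial.cyclotomic N ℂ ∣ ∑ j ∈ Finset.range (m + 1), C (a j) * X ^ (m - j)) ↔
      ∀ h < N / 2,
        ∑ d ∈ N.divisors, (ArithmeticFunction.moebius d : ℂ) *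
          ∑ j ∈ (Finset.range (m + 1)).filter
              (fun (j : ℕ) => (j : ℤ) ≡
                (h : ℤ) - ∑ p ∈ d.primeFactors, ((N / p : ℕ) : ℤ) [ZMOD (N : ℤ)]),
            a j = 0 := by
  have : NeZero N := ⟨by omega⟩
  simp_rw [← moebiusResidueSum_natCast]
  rw [cyclotomic_dvd_sum_C_mul_X_pow_sub_iff (Complex.isPrimitiveRoot_exp N (NeZero.ne N)),
    ← moebiusResidueSum_eq_zero_iff, moebiusResidueSum_eq_zero_iff_of_even _ _ hNeven]

theorem divisibility_by_cyclotomic_even (m N : ℕ) (a : ℕ → ℂ) (hN : 1 ≤ N)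
    (hNeven : Even N) (hm : N.totient ≤ m) :
    (Polynomial.cyclotomic N ℂ ∣ ∑ j ∈ Finset.range (m + 1), C (a j) * X ^ (m - j)) ↔
      ∀ h < N / 2,
        ∑ d ∈ N.divisors, (ArithmeticFunction.moebius d : ℂ) *
          ∑ j ∈ (Finset.range (m + 1)).filter
              (fun (j : ℕ) => (j : ℤ) ≡
                (h : ℤ) - ∑ p ∈ d.primeFactors, ((N / p : ℕ) : ℤ) [ZMOD (N : ℤ)]),
            a j = 0 :=
  divisibility_by_cyclotomic_even_general m N a hN hNeven
end

section
/- Hölder's identity: For a positive integer n and an integer r, c_n(r) = φ(n) μ(n/d) / φ(n/d), where d = gcd(n, r). -/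
/-!
Write `g = gcd(n, r)`, `n = g m` and `r = g s`, so that `s` is prime to `m`. The summand
`e^{2πi u r / n}` of `c_n(r)` only depends on the image `v` of the unit `u` in `(ZMod m)ˣ`, where
it equals `e^{2πi v s / m}`. Reduction `(ZMod n)ˣ → (ZMod m)ˣ` is a surjective homomorphism, so
all its fibres have `φ(n) / φ(m)` elements and `φ(m) c_n(r) = φ(n) c_m(s)`. As `s` is a unit
mod `m`, `c_m(s) = c_m(1)` is the sum of the primitive `m`-th roots of unity, which is `μ(m)` by
Möbius inversion of `∑_{d ∣ m} (sum of the primitive d-th roots) = ∑_{z^m = 1} z = [m = 1]`.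
-/

open Polynomial Finset

/-- The Ramanujan sum `c_n(r) = ∑_{1 ≤ j ≤ n, gcd(j,n)=1} e^{2πijr/n}`. -/
noncomputable def ramanujanSum (n : ℕ) (r : ℤ) : ℂ :=
  ∑ j ∈ Finset.Icc 1 n, if Nat.gcd j n = 1 then
    Complex.exp (2 * (Real.pi : ℂ) * Complex.I * (j : ℂ) * (r : ℂ) / (n : ℂ)) else 0

theorem Finset.sum_Icc_one_eq_sum_range {M : Type*} [AddCommMonoid M] {f : ℕ → M} {n : ℕ}
    (h : f n = f 0) : ∑ j ∈ Icc 1 n, f j = ∑ j ∈ range n, f j := by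
  rw [← Ico_add_one_right_eq_Icc, sum_Ico_eq_sum_range, add_tsub_cancel_right]
  simp only [add_comm 1]
  cases n with
  | zero => simp
  | succ m => rw [sum_range_succ, h, ← sum_range_succ']

theorem MonoidHom.card_smul_sum_comp_of_surjective {G H M : Type*} [Group G] [Group H]
    [Fintype G] [Fintype H] [AddCommMonoid M] (f : G →* H) (hf : Function.Surjective f)
    (F : H → M) :
    Fintype.card H • ∑ g, F (f g) = Fintype.card G • ∑ h, F h := by
  classical
  have hfiber : ∀ h, #{g | f g = h} = #{g | f g = 1} := fun h ↦
    MonoidHom.card_fiber_eq_of_mem_range f (hf h) ⟨1, map_one f⟩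
  have hcard : Fintype.card G = Fintype.card H * #{g | f g = 1} := by
    rw [← card_univ, card_eq_sum_card_fiberwise (fun g _ ↦ mem_univ (f g))]
    simp [hfiber]
  rw [Finset.sum_comp, image_univ_of_surjective hf, hcard, mul_smul]
  simp only [hfiber, ← smul_sum]

namespace IsPrimitiveRoot

variable {R : Type*} [CommRing R] [IsDomain R] {ζ : R} {k : ℕ}

theorem nthRootsFinset_one_eq_image [DecidableEq R] (hζ : IsPrimitiveRoot ζ k) :
    nthRootsFinset k (1 : R) = (range k).image (ζ ^ ·) := by
  rcases k.eq_zero_or_pos with rfl | hk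
  · simp
  have : NeZero k := ⟨hk.ne'⟩
  ext z
  simp only [Polynomial.mem_nthRootsFinset hk, mem_image, mem_range]
  constructor
  · exact hζ.eq_pow_of_pow_eq_one
  · rintro ⟨i, -, rfl⟩
    rw [← pow_mul, mul_comm, pow_mul, hζ.pow_eq_one, one_pow]

theorem sum_nthRootsFinset_one (hζ : IsPrimitiveRoot ζ k) :
    ∑ z ∈ nthRootsFinset k (1 : R), z = if k = 1 then 1 else 0 := by
  classical
  rw [hζ.nthRootsFinset_one_eq_image,
    sum_image fun i hi j hj ↦ hζ.pow_inj (mem_range.1 hi) (mem_range.1 hj)]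
  split_ifs with hk
  · simp [hk]
  rcases k.eq_zero_or_pos with rfl | hk0
  · simp
  exact hζ.geom_sum_eq_zero (by omega)

theorem sum_primitiveRoots (hζ : IsPrimitiveRoot ζ k) :
    ∑ z ∈ primitiveRoots k R, z = ArithmeticFunction.moebius k := by
  classical
  rcases k.eq_zero_or_pos with rfl | hk
  · simp
  have hdiv : ∀ d > 0, d ∣ k →
      ∑ e ∈ d.divisors, ∑ z ∈ primitiveRoots e R, z = if d = 1 then 1 else 0 := by
    intro d hd hdk
    rw [← sum_biUnion fun i _ j _ hij ↦ IsPrimitiveRoot.disjoint hij,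
      ← nthRoots_one_eq_biUnion_primitiveRoots]
    have hζd := hζ.pow_of_dvd (Nat.div_pos (Nat.le_of_dvd hk hdk) hd).ne' (Nat.div_dvd_of_dvd hdk)
    rw [Nat.div_div_self hdk hk.ne'] at hζd
    exact hζd.sum_nthRootsFinset_one
  have := (ArithmeticFunction.sum_eq_iff_sum_mul_moebius_eq_on {d | d ∣ k}
    (fun _ _ ↦ dvd_trans)).1 hdiv k hk dvd_rfl
  rw [← this, Nat.sum_divisorsAntidiagonal' fun a b ↦
    (ArithmeticFunction.moebius a : R) * if b = 1 then 1 else 0]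
  simp [hk.ne']

end IsPrimitiveRoot

namespace ZMod

variable {n : ℕ} [NeZero n]

theorem sum_range_natCast {M : Type*} [AddCommMonoid M] (F : ZMod n → M) :
    ∑ j ∈ range n, F j = ∑ x, F x :=
  sum_nbij' (fun j ↦ (j : ZMod n)) val (fun _ _ ↦ mem_univ _)
    (fun x _ ↦ mem_range.2 (val_lt x)) (fun _ hj ↦ val_cast_of_lt (mem_range.1 hj))
    (fun x _ ↦ natCast_zmod_val x) (fun _ _ ↦ rfl)

theorem sum_units_eq_sum_filter_isUnit {M : Type*} [AddCommMonoid M] (F : ZMod n → M) :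
    ∑ u : (ZMod n)ˣ, F u = ∑ x with IsUnit x, F x := by
  classical
  have : ({x | IsUnit x} : Finset (ZMod n)) = univ.map ⟨Units.val, Units.val_injective⟩ := by
    ext x
    simp [IsUnit, eq_comm]
  rw [this, sum_map]
  rfl

theorem isPrimitiveRoot_stdAddChar_one : IsPrimitiveRoot (stdAddChar (1 : ZMod n)) n := by
  rw [← Int.cast_one, stdAddChar_coe, Int.cast_one, mul_one]
  exact Complex.isPrimitiveRoot_exp n (NeZero.ne n)

theorem stdAddChar_natCast (j : ℕ) : stdAddChar (j : ZMod n) = stdAddChar (1 : ZMod n) ^ j := by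
  rw [← AddChar.map_nsmul_eq_pow, nsmul_one]

theorem stdAddChar_natCast_mul {g m : ℕ} [NeZero g] [NeZero m] (x : ZMod (g * m)) :
    stdAddChar ((g : ZMod (g * m)) * x) = stdAddChar (castHom (dvd_mul_left m g) (ZMod m) x) := by
  obtain ⟨j, rfl⟩ := intCast_surjective x
  rw [map_intCast, ← Int.cast_natCast, ← Int.cast_mul, stdAddChar_coe, stdAddChar_coe]
  congr 1
  have hg : (g : ℂ) ≠ 0 := NeZero.ne _
  push_cast
  field_simp

theorem sum_units_stdAddChar_eq_sum_primitiveRoots :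
    ∑ u : (ZMod n)ˣ, stdAddChar (u : ZMod n) = ∑ z ∈ primitiveRoots n ℂ, z := by
  have hζ := isPrimitiveRoot_stdAddChar_one (n := n)
  have hn := NeZero.pos n
  refine sum_bij (fun u _ ↦ stdAddChar (u : ZMod n)) (fun u _ ↦ ?_)
    (fun u _ v _ huv ↦ Units.ext (injective_stdAddChar huv)) (fun z hz ↦ ?_) fun _ _ ↦ rfl
  · rw [mem_primitiveRoots hn, ← natCast_zmod_val (u : ZMod n), stdAddChar_natCast]
    exact hζ.pow_of_coprime _ (val_coe_unit_coprime u)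
  · rw [mem_primitiveRoots hn] at hz
    obtain ⟨i, -, rfl⟩ := hζ.eq_pow_of_pow_eq_one hz.pow_eq_one
    refine ⟨unitOfCoprime i ((hζ.pow_iff_coprime hn i).1 hz), mem_univ _, ?_⟩
    rw [coe_unitOfCoprime, stdAddChar_natCast]

theorem sum_units_stdAddChar :
    ∑ u : (ZMod n)ˣ, stdAddChar (u : ZMod n) = ArithmeticFunction.moebius n := by
  rw [sum_units_stdAddChar_eq_sum_primitiveRoots,
    isPrimitiveRoot_stdAddChar_one.sum_primitiveRoots]

theorem sum_units_stdAddChar_mul_of_isUnit {s : ZMod n} (hs : IsUnit s) :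
    ∑ u : (ZMod n)ˣ, stdAddChar ((u : ZMod n) * s) =
      ∑ u : (ZMod n)ˣ, stdAddChar (u : ZMod n) :=
  Fintype.sum_equiv (Equiv.mulRight hs.unit) _ _ fun _ ↦ rfl

end ZMod

theorem ramanujanSum_eq_sum_units (n : ℕ) [NeZero n] (r : ℤ) :
    ramanujanSum n r = ∑ u : (ZMod n)ˣ, ZMod.stdAddChar ((u : ZMod n) * (r : ZMod n)) := by
  set F : ZMod n → ℂ := fun x ↦ if IsUnit x then ZMod.stdAddChar (x * (r : ZMod n)) else 0
  calc ramanujanSum n r = ∑ j ∈ Icc 1 n, F j := sum_congr rfl fun j _ ↦ ?_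
    _ = ∑ j ∈ range n, F j := sum_Icc_one_eq_sum_range (by simp)
    _ = ∑ x, F x := ZMod.sum_range_natCast F
    _ = _ := by rw [← sum_filter]; exact (ZMod.sum_units_eq_sum_filter_isUnit _).symm
  simp only [F, ZMod.isUnit_iff_coprime, Nat.coprime_iff_gcd_eq_one]
  congr 1
  rw [← Int.cast_natCast (R := ZMod n), ← Int.cast_mul, ZMod.stdAddChar_coe]
  push_cast
  ring_nf

theorem ramanujanSum_of_isCoprime (m : ℕ) [NeZero m] {s : ℤ} (hs : IsCoprime s m) :
    ramanujanSum m s = ArithmeticFunction.moebius m := by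
  have hs' : IsUnit (s : ZMod m) := (ZMod.unitOfIsCoprime s hs).isUnit
  rw [ramanujanSum_eq_sum_units, ZMod.sum_units_stdAddChar_mul_of_isUnit hs',
    ZMod.sum_units_stdAddChar]

theorem totient_mul_ramanujanSum_mul (g m : ℕ) [NeZero g] [NeZero m] (s : ℤ) :
    (m.totient : ℂ) * ramanujanSum (g * m) (g * s) = (g * m).totient * ramanujanSum m s := by
  have hdvd := dvd_mul_left m g
  have key := (ZMod.unitsMap hdvd).card_smul_sum_comp_of_surjective
    (ZMod.unitsMap_surjective hdvd) fun v : (ZMod m)ˣ ↦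
      ZMod.stdAddChar ((v : ZMod m) * (s : ZMod m))
  rw [ZMod.card_units_eq_totient, ZMod.card_units_eq_totient, nsmul_eq_mul, nsmul_eq_mul] at key
  rw [ramanujanSum_eq_sum_units, ramanujanSum_eq_sum_units, ← key]
  congr 1
  refine sum_congr rfl fun u _ ↦ ?_
  rw [Int.cast_mul, Int.cast_natCast, mul_left_comm, ZMod.stdAddChar_natCast_mul, map_mul,
    map_intCast]
  rfl

theorem holder_identity (n : ℕ) (hn : 1 ≤ n) (r : ℤ) :
    ramanujanSum n r =
      (n.totient : ℂ) *
        (ArithmeticFunction.moebius (n / Int.gcd (n : ℤ) r) : ℂ) /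
          ((n / Int.gcd (n : ℤ) r : ℕ).totient : ℂ) := by
  set g := Int.gcd n r
  set m := n / g
  have hg : 0 < g := Int.gcd_pos_of_ne_zero_left r (by omega)
  have hnm : n = g * m :=
    (Nat.mul_div_cancel' (Int.natCast_dvd_natCast.1 (Int.gcd_dvd_left ..))).symm
  have : NeZero g := ⟨hg.ne'⟩
  have : NeZero m := ⟨by rintro h; rw [h, mul_zero] at hnm; omega⟩
  have hr : r = g * (r / g) := (Int.mul_ediv_cancel' (Int.gcd_dvd_right ..)).symm
  have hs : IsCoprime (r / g) m := by
    have hcop := Int.gcd_div_gcd_div_gcd hg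
    rw [← Int.natCast_div] at hcop
    exact (Int.isCoprime_iff_gcd_eq_one.2 hcop).symm
  have key := totient_mul_ramanujanSum_mul g m (r / g)
  rw [ramanujanSum_of_isCoprime m hs, ← hnm, ← hr] at key
  have hφ : (m.totient : ℂ) ≠ 0 := by exact_mod_cast (Nat.totient_pos.2 (NeZero.pos m)).ne'
  rw [eq_div_iff hφ, mul_comm, key]
end

section
/- For every positive integer n, c_n(n/γ(n)) = (−1)^{ω(n)} · n/γ(n), where γ(n) = ∏_{p|n} p is the square-free kernel of n and ω(n) the number of distinct prime factors of n. -/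
open Polynomial Finset

/-!
Writing the coprimality condition `gcd(j, n) = 1` as `∑_{d ∣ gcd(j, n)} μ(d)` and summing the
resulting geometric series gives the classical formula `c_n(r) = ∑_{d ∣ n, n/d ∣ r} μ(d) n/d`.
For `r = n/γ(n)`, with `γ(n) = radical n`, the condition `n/d ∣ n/γ(n)` means `γ(n) ∣ d`, and
`γ(n)` is the only squarefree divisor of `n` with this property, so the sum collapses to
`μ(γ(n)) n/γ(n)`.
-/

open ArithmeticFunction UniqueFactorizationMonoid Complex
open scoped ArithmeticFunction.Moebius Real

theorem Nat.div_dvd_div_left_iff {k m n : ℕ} (hk : k ≠ 0) (hm : m ∣ k) (hn : n ∣ k) :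
    k / m ∣ k / n ↔ n ∣ m := by
  refine ⟨fun h => ?_, Nat.div_dvd_div_left hm⟩
  have hkm : k / m ≠ 0 := (Nat.div_ne_zero_iff_of_dvd hm).2 ⟨hk, ne_zero_of_dvd_ne_zero hk hm⟩
  rw [← Nat.mul_dvd_mul_iff_left (Nat.pos_of_ne_zero hkm), Nat.div_mul_cancel hm]
  simpa [Nat.div_mul_cancel hn] using Nat.mul_dvd_mul_right h n

theorem Nat.Icc_filter_dvd_eq_image {d : ℕ} (hd : d ≠ 0) (n : ℕ) :
    {j ∈ Icc 1 n | d ∣ j} = (Icc 1 (n / d)).image (d * ·) := by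
  ext j
  simp only [mem_filter, mem_Icc, mem_image, Nat.le_div_iff_mul_le (Nat.pos_of_ne_zero hd)]
  constructor
  · rintro ⟨⟨hj1, hjn⟩, k, rfl⟩
    exact ⟨k, ⟨Nat.pos_of_mul_pos_left hj1, by rwa [mul_comm]⟩, rfl⟩
  · rintro ⟨k, ⟨hk1, hkn⟩, rfl⟩
    exact ⟨⟨Nat.mul_pos (Nat.pos_of_ne_zero hd) hk1, by rwa [mul_comm]⟩, dvd_mul_right d k⟩

theorem Nat.eq_radical_of_squarefree_of_radical_dvd {n d : ℕ} (hn : n ≠ 0) (hd : d ∣ n)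
    (hrad : radical n ∣ d) (hsq : Squarefree d) : d = radical n :=
  Nat.dvd_antisymm ((dvd_radical_iff hsq.isRadical hn).2 hd) hrad

theorem ArithmeticFunction.moebius_radical (n : ℕ) : μ (radical n) = (-1) ^ #n.primeFactors := by
  rw [moebius_apply_of_squarefree squarefree_radical,
    ← (cardDistinctFactors_eq_cardFactors_iff_squarefree radical_ne_zero).2 squarefree_radical,
    cardDistinctFactors_apply, ← List.card_toFinset, Nat.toFinset_factors, Nat.primeFactors_radical]

theorem ArithmeticFunction.sum_moebius_divisors_filter_dvd {R : Type*} [Ring R] {n : ℕ}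
    (hn : n ≠ 0) (j : ℕ) :
    ∑ d ∈ n.divisors with d ∣ j, (μ d : R) = if j.gcd n = 1 then 1 else 0 := by
  have hdiv : {d ∈ n.divisors | d ∣ j} = (j.gcd n).divisors := by
    rw [← Nat.divisors_filter_dvd_of_dvd hn (Nat.gcd_dvd_right j n)]
    refine filter_congr fun d hd => ?_
    rw [Nat.dvd_gcd_iff, and_iff_left (Nat.dvd_of_mem_divisors hd)]
  rw [hdiv, ← one_apply, ← coe_moebius_mul_coe_zeta, coe_mul_zeta_apply]
  simp

theorem Complex.sum_Icc_exp_eq_ite (m : ℕ) (a : ℤ) :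
    ∑ k ∈ Icc 1 m, exp (2 * π * I * k * a / m) = if (m : ℤ) ∣ a then (m : ℂ) else 0 := by
  rcases eq_or_ne m 0 with rfl | hm
  · simp
  have hterm (k : ℕ) : exp (2 * π * I * k * a / m) = (exp (2 * π * I / m) ^ a) ^ k := by
    rw [← exp_int_mul, ← exp_nat_mul]
    ring_nf
  simp_rw [hterm]
  have hζ := isPrimitiveRoot_exp m hm
  generalize exp (2 * π * I / m) = ζ at hζ ⊢
  split_ifs with h
  · simp [(hζ.zpow_eq_one_iff_dvd a).mpr h]
  · have hz : ζ ^ a ≠ 1 := fun hz => h ((hζ.zpow_eq_one_iff_dvd a).mp hz)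
    have hzm : (ζ ^ a) ^ m = 1 := by
      rw [← zpow_natCast, ← zpow_mul, mul_comm, zpow_mul, zpow_natCast, hζ.pow_eq_one, one_zpow]
    have hgeom : ∑ k ∈ range m, (ζ ^ a) ^ k = 0 :=
      eq_zero_of_ne_zero_of_mul_left_eq_zero (sub_ne_zero_of_ne hz.symm)
        (by rw [mul_neg_geom_sum, hzm, sub_self])
    rw [← Ico_add_one_right_eq_Icc, sum_Ico_eq_sum_range]
    simp only [add_tsub_cancel_right, add_comm 1, pow_succ, ← sum_mul, hgeom, zero_mul]

theorem ramanujanSum_eq_sum_divisors (n : ℕ) (r : ℤ) :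
    ramanujanSum n r =
      ∑ d ∈ n.divisors, if ((n / d : ℕ) : ℤ) ∣ r then (μ d : ℂ) * (n / d : ℕ) else 0 := by
  rcases eq_or_ne n 0 with rfl | hn
  · simp [ramanujanSum]
  let e (j : ℕ) : ℂ := exp (2 * π * I * j * r / n)
  calc ramanujanSum n r = ∑ j ∈ Icc 1 n, ∑ d ∈ n.divisors with d ∣ j, (μ d : ℂ) * e j := by
        refine sum_congr rfl fun j _ => ?_
        rw [← sum_mul, sum_moebius_divisors_filter_dvd hn, ite_mul, one_mul, zero_mul]
    _ = ∑ d ∈ n.divisors, (μ d : ℂ) * ∑ j ∈ Icc 1 n with d ∣ j, e j := by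
        simp_rw [mul_sum]
        refine sum_comm' fun j d => ?_
        simp only [mem_filter, mem_Icc, Nat.mem_divisors]
        tauto
    _ = ∑ d ∈ n.divisors, (μ d : ℂ) *
          ∑ k ∈ Icc 1 (n / d), exp (2 * π * I * k * r / (n / d : ℕ)) := by
        refine sum_congr rfl fun d hd => ?_
        have hd0 : d ≠ 0 := Nat.ne_of_gt (Nat.pos_of_mem_divisors hd)
        rw [Nat.Icc_filter_dvd_eq_image hd0,
          sum_image fun _ _ _ _ h => Nat.eq_of_mul_eq_mul_left (Nat.pos_of_ne_zero hd0) h]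
        refine congrArg _ (sum_congr rfl fun k _ => ?_)
        rw [Nat.cast_div (Nat.dvd_of_mem_divisors hd) (by exact_mod_cast hd0)]
        simp only [e]
        push_cast
        field_simp
    _ = _ := by simp_rw [sum_Icc_exp_eq_ite, mul_ite, mul_zero]

theorem ramanujan_at_n_div_kernel_general (n : ℕ) :
    ramanujanSum n ((n / (∏ p ∈ n.primeFactors, p) : ℕ) : ℤ) =
      (-1 : ℂ) ^ n.primeFactors.card * ((n / (∏ p ∈ n.primeFactors, p) : ℕ) : ℂ) := by
  rw [← Nat.radical_eq_prod_primeFactors, ramanujanSum_eq_sum_divisors]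
  rcases eq_or_ne n 0 with rfl | hn
  · simp
  have hdvd (d : ℕ) (hd : d ∈ n.divisors) :
      ((n / d : ℕ) : ℤ) ∣ ((n / radical n : ℕ) : ℤ) ↔ radical n ∣ d := by
    rw [Int.natCast_dvd_natCast,
      Nat.div_dvd_div_left_iff hn (Nat.dvd_of_mem_divisors hd) radical_dvd_self]
  have hrad_mem : radical n ∈ n.divisors := Nat.mem_divisors.2 ⟨radical_dvd_self, hn⟩
  rw [sum_eq_single_of_mem _ hrad_mem fun d hd hne => ?_,
    if_pos ((hdvd _ hrad_mem).2 dvd_rfl), moebius_radical]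
  · push_cast
    rfl
  refine ite_eq_right_iff.2 fun h => ?_
  have hsq : ¬Squarefree d := fun hsq => hne <| Nat.eq_radical_of_squarefree_of_radical_dvd hn
    (Nat.dvd_of_mem_divisors hd) ((hdvd d hd).1 h) hsq
  rw [moebius_eq_zero_of_not_squarefree hsq, Int.cast_zero, zero_mul]

theorem ramanujan_at_n_div_kernel (n : ℕ) (hn : 1 ≤ n) :
    ramanujanSum n ((n / (∏ p ∈ n.primeFactors, p) : ℕ) : ℤ) =
      (-1 : ℂ) ^ n.primeFactors.card * ((n / (∏ p ∈ n.primeFactors, p) : ℕ) : ℂ) :=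
  ramanujan_at_n_div_kernel_general n
end
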